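/- arXiv:2510.03820 — 6 statements merged into one kernel-verified Lean document; each statement's English description precedes it below -/
import Mathlib

section
/- Let (X,d) be a b-metric space with coefficient s ≥ 1, and T : X → X a PA-contraction with constant α ∈ (0,1) and threshold N. Then for every x ∈ X, the series ∑_{k=0}^∞ d(T^k x, T^{k+1} x) converges; in particular the sequence of partial sums is bounded. -/
theorem stmt_1 (X : Type*) (d : X → X → ℝ) (s : ℝ) (hs : 1 ≤ s)
    (hnonneg : ∀ x y, 0 ≤ d x y)
    (hd0 : ∀ x y, d x y = 0 ↔ x = y)
    (hsymm : ∀ x y, d x y = d y x)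
    (htri : ∀ x y z, d x z ≤ s * (d x y + d y z))
    (T : X → X) (α : ℝ) (hα : α ∈ Set.Ioo (0:ℝ) 1) (N : ℕ)
    (hPA : ∀ x y : X, ∀ n ≥ N,
      ∑ k ∈ Finset.range n, d (T^[k+1] x) (T^[k+1] y)
        ≤ α * ∑ k ∈ Finset.range n, d (T^[k] x) (T^[k] y))
    (x : X) :
    (∃ M, ∀ n, ∑ k ∈ Finset.range n, d (T^[k] x) (T^[k+1] x) ≤ M) ∧
    (∃ l, Filter.Tendsto (fun n => ∑ k ∈ Finset.range n, d (T^[k] x) (T^[k+1] x))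
      Filter.atTop (nhds l)) := by
  obtain ⟨hα0, hα1⟩ := hα
  set S : ℕ → ℝ := fun n => ∑ k ∈ Finset.range n, d (T^[k] x) (T^[k+1] x) with hS
  set c : ℝ := d x (T x) with hc
  have hmono : Monotone S := by
    intro m n hmn
    exact Finset.sum_le_sum_of_subset_of_nonneg (Finset.range_subset_range.2 hmn)
      (fun i _ _ => hnonneg _ _)
  have key : ∀ n ≥ N, S (n + 1) ≤ c + α * S n := by
    intro n hn
    have h := hPA x (T x) n hn
    simp only [← Function.iterate_succ_apply T] at h
    have : S (n + 1) = (∑ k ∈ Finset.range n, d (T^[k+1] x) (T^[k+1+1] x)) + c := by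
      rw [hS]
      exact Finset.sum_range_succ' _ n
    rw [this]
    linarith [h]
  set M : ℝ := max (S N) (c / (1 - α)) with hM
  have hc1 : c ≤ (1 - α) * M := by
    have : c / (1 - α) ≤ M := le_max_right _ _
    have h1α : (0:ℝ) < 1 - α := by linarith
    calc c = (1 - α) * (c / (1 - α)) := by field_simp
    _ ≤ (1 - α) * M := by nlinarith
  have hbound : ∀ n, S n ≤ M := by
    have hshift : ∀ m, S (N + m) ≤ M := by
      intro m
      induction m with
      | zero => exact le_max_left (S N) (c / (1 - α))
      | succ m ih =>
        have := key (N + m) (Nat.le_add_right _ _)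
        have : S (N + m + 1) ≤ c + α * M := by nlinarith
        calc S (N + (m + 1)) = S (N + m + 1) := by ring_nf
        _ ≤ c + α * M := this
        _ ≤ (1 - α) * M + α * M := by linarith
        _ = M := by ring
    intro n
    rcases le_or_gt n N with h | h
    · exact le_trans (hmono h) (by simpa using hshift 0)
    · have := hshift (n - N)
      rwa [Nat.add_sub_cancel' h.le] at this
  refine ⟨⟨M, hbound⟩, ?_⟩
  have hbdd : BddAbove (Set.range S) := ⟨M, by rintro _ ⟨n, rfl⟩; exact hbound n⟩
  exact ⟨⨆ n, S n, tendsto_atTop_ciSup hmono hbdd⟩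
end

section
/- Let T be a PA-contraction on a b-metric space with constant α ∈ (0,1) and threshold N, and fix x ∈ X. Then there is a constant C ≥ 0 such that d(T^k x, T^{k+1} x) ≤ C·α^k for all k ≥ 0, i.e., the successive orbit distances decay geometrically. -/
theorem stmt_3 (X : Type*) (d : X → X → ℝ) (s : ℝ) (hs : 1 ≤ s)
    (hnonneg : ∀ x y, 0 ≤ d x y)
    (hd0 : ∀ x y, d x y = 0 ↔ x = y)
    (hsymm : ∀ x y, d x y = d y x)
    (htri : ∀ x y z, d x z ≤ s * (d x y + d y z))
    (T : X → X) (α : ℝ) (hα : α ∈ Set.Ioo (0:ℝ) 1) (N : ℕ)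
    (hPA : ∀ x y : X, ∀ n ≥ N,
      ∑ k ∈ Finset.range n, d (T^[k+1] x) (T^[k+1] y)
        ≤ α * ∑ k ∈ Finset.range n, d (T^[k] x) (T^[k] y))
    (x : X) :
    ∃ C : ℝ, 0 ≤ C ∧ ∀ k : ℕ, d (T^[k] x) (T^[k+1] x) ≤ C * α ^ k := by
  obtain ⟨hα0, hα1⟩ := hα
  set a : ℕ → ℝ := fun k => d (T^[k] x) (T^[k+1] x) with ha
  have hiter : ∀ m k : ℕ, d (T^[k] (T^[m] x)) (T^[k] (T^[m+1] x)) = a (m + k) := by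
    intro m k
    simp only [ha, ← Function.iterate_add_apply]
    congr 2 <;> omega
  set C : ℝ := ∑ k ∈ Finset.range (N + 1), a k with hC
  have key : ∀ j, ∑ k ∈ Finset.range (N + 1), a (j + k) ≤ C * α ^ j := by
    intro j
    induction j with
    | zero => simp [hC]
    | succ j ih =>
      have h := hPA (T^[j] x) (T^[j+1] x) (N + 1) (by omega)
      have hL : ∑ k ∈ Finset.range (N + 1), d (T^[k+1] (T^[j] x)) (T^[k+1] (T^[j+1] x))
          = ∑ k ∈ Finset.range (N + 1), a (j + 1 + k) := by
        refine Finset.sum_congr rfl fun k _ => ?_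
        rw [hiter]; congr 1; omega
      have hR : ∑ k ∈ Finset.range (N + 1), d (T^[k] (T^[j] x)) (T^[k] (T^[j+1] x))
          = ∑ k ∈ Finset.range (N + 1), a (j + k) := by
        refine Finset.sum_congr rfl fun k _ => ?_
        rw [hiter]
      rw [hL, hR] at h
      calc ∑ k ∈ Finset.range (N + 1), a (j + 1 + k)
          ≤ α * ∑ k ∈ Finset.range (N + 1), a (j + k) := h
        _ ≤ α * (C * α ^ j) := by
            exact mul_le_mul_of_nonneg_left ih hα0.le
        _ = C * α ^ (j + 1) := by ring
  refine ⟨C, Finset.sum_nonneg fun k _ => hnonneg _ _, fun k => ?_⟩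
  have h1 : a k ≤ ∑ i ∈ Finset.range (N + 1), a (k + i) := by
    have := Finset.single_le_sum (f := fun i => a (k + i))
      (fun i _ => hnonneg _ _) (Finset.mem_range.mpr (Nat.succ_pos N))
    simpa using this
  exact h1.trans (key k)
end

section
/- Let (X,d) be a b-metric space with coefficient s ≥ 1 and let (x_n) be a sequence in X with d(x_j, x_{j+1}) ≤ C·α^j for all j, where C ≥ 0 and α ∈ (0,1) satisfy s·α < 1. Then for all m > n, d(x_n, x_m) ≤ C·s·α^n/(1 - sα); in particular (x_n) is a Cauchy sequence. -/
theorem stmt_5 (X : Type*) (d : X → X → ℝ) (s : ℝ) (hs : 1 ≤ s)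
    (hnonneg : ∀ x y, 0 ≤ d x y)
    (hd0 : ∀ x y, d x y = 0 ↔ x = y)
    (hsymm : ∀ x y, d x y = d y x)
    (htri : ∀ x y z, d x z ≤ s * (d x y + d y z))
    (x : ℕ → X) (C α : ℝ) (hC : 0 ≤ C) (hα : α ∈ Set.Ioo (0:ℝ) 1)
    (hsα : s * α < 1)
    (hgeo : ∀ j : ℕ, d (x j) (x (j + 1)) ≤ C * α ^ j) :
    (∀ n m : ℕ, n < m → d (x n) (x m) ≤ C * s * α ^ n / (1 - s * α)) ∧
    Filter.Tendsto (fun p : ℕ × ℕ => d (x p.1) (x p.2)) Filter.atTop (nhds 0) := by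
  obtain ⟨hα0, hα1⟩ := hα
  have hden : 0 < 1 - s * α := by linarith
  have hs0 : 0 ≤ s := by linarith
  have key : ∀ k n : ℕ, d (x n) (x (n + k + 1)) ≤ C * s * α ^ n / (1 - s * α) := by
    intro k
    induction k with
    | zero =>
      intro n
      have h := hgeo n
      have hαn : 0 ≤ α ^ n := pow_nonneg hα0.le n
      simp only [Nat.add_zero]
      rw [le_div_iff₀ hden]
      nlinarith [mul_le_mul_of_nonneg_right h hden.le, mul_nonneg (mul_nonneg hC hαn) (mul_nonneg hs0 hα0.le), mul_nonneg hC hαn]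
    | succ k ih =>
      intro n
      have h1 := htri (x n) (x (n + 1)) (x (n + k + 2))
      have h2 : d (x (n + 1)) (x ((n + 1) + k + 1)) ≤ C * s * α ^ (n + 1) / (1 - s * α) :=
        ih (n + 1)
      have he : (n + 1) + k + 1 = n + k + 2 := by ring
      rw [he] at h2
      have h3 := hgeo n
      have hαn : 0 ≤ α ^ n := pow_nonneg hα0.le n
      have : d (x n) (x (n + k + 2)) ≤ s * (C * α ^ n + C * s * α ^ (n + 1) / (1 - s * α)) := by
        calc d (x n) (x (n + k + 2)) ≤ s * (d (x n) (x (n + 1)) + d (x (n + 1)) (x (n + k + 2))) := h1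
        _ ≤ s * (C * α ^ n + C * s * α ^ (n + 1) / (1 - s * α)) := by
            apply mul_le_mul_of_nonneg_left _ hs0
            exact add_le_add h3 h2
      refine this.trans ?_
      rw [le_div_iff₀ hden]
      have : α ^ (n + 1) = α ^ n * α := pow_succ α n
      rw [this]
      field_simp
      nlinarith [mul_nonneg (mul_nonneg hC hs0) hαn]
  have main : ∀ n m : ℕ, n < m → d (x n) (x m) ≤ C * s * α ^ n / (1 - s * α) := by
    intro n m hnm
    obtain ⟨k, rfl⟩ := Nat.exists_eq_add_of_lt hnm
    exact key k n
  refine ⟨main, ?_⟩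
  have hRHS0 : ∀ k : ℕ, 0 ≤ C * s * α ^ k / (1 - s * α) := fun k =>
    div_nonneg (mul_nonneg (mul_nonneg hC hs0) (pow_nonneg hα0.le k)) hden.le
  have hbound : ∀ p : ℕ × ℕ, d (x p.1) (x p.2) ≤ C * s * α ^ (min p.1 p.2) / (1 - s * α) := by
    rintro ⟨n, m⟩
    rcases lt_trichotomy n m with h | h | h
    · simpa [min_eq_left h.le] using main n m h
    · subst h; simpa [(hd0 (x n) (x n)).mpr rfl] using hRHS0 (min n n)
    · rw [hsymm]; simpa [min_eq_right h.le] using main m n h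
  have hmin : Filter.Tendsto (fun p : ℕ × ℕ => min p.1 p.2) Filter.atTop Filter.atTop := by
    apply Filter.tendsto_atTop.2
    intro b
    filter_upwards [Filter.eventually_ge_atTop ((b, b) : ℕ × ℕ)] with p hp
    exact le_min hp.1 hp.2
  have hpow : Filter.Tendsto (fun k : ℕ => C * s * α ^ k / (1 - s * α)) Filter.atTop (nhds 0) := by
    have := tendsto_pow_atTop_nhds_zero_of_lt_one hα0.le hα1
    have h2 := (this.const_mul (C * s)).div_const (1 - s * α)
    simpa using h2
  exact squeeze_zero (fun p => hnonneg _ _) hbound (hpow.comp hmin)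
end

section
/- Let (X,d) be a complete b-metric space with coefficient s ≥ 1 and let T : X → X be a continuous PA-contraction with constant α ∈ (0,1) satisfying sα < 1. Then for every x ∈ X the sequence (T^n x) is Cauchy and converges to some point of X. -/
theorem stmt_7 (X : Type*) (d : X → X → ℝ) (s : ℝ) (hs : 1 ≤ s)
    (hnonneg : ∀ x y, 0 ≤ d x y)
    (hd0 : ∀ x y, d x y = 0 ↔ x = y)
    (hsymm : ∀ x y, d x y = d y x)
    (htri : ∀ x y z, d x z ≤ s * (d x y + d y z))
    (hcomplete : ∀ u : ℕ → X,
      Filter.Tendsto (fun p : ℕ × ℕ => d (u p.1) (u p.2)) Filter.atTop (nhds 0) →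
      ∃ z : X, Filter.Tendsto (fun n => d (u n) z) Filter.atTop (nhds 0))
    (T : X → X)
    (hcont : ∀ (u : ℕ → X) (z : X),
      Filter.Tendsto (fun n => d (u n) z) Filter.atTop (nhds 0) →
      Filter.Tendsto (fun n => d (T (u n)) (T z)) Filter.atTop (nhds 0))
    (α : ℝ) (hα : α ∈ Set.Ioo (0:ℝ) 1) (hsα : s * α < 1) (N : ℕ)
    (hPA : ∀ x y : X, ∀ n ≥ N,
      ∑ k ∈ Finset.range n, d (T^[k+1] x) (T^[k+1] y)
        ≤ α * ∑ k ∈ Finset.range n, d (T^[k] x) (T^[k] y))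
    (x : X) :
    Filter.Tendsto (fun p : ℕ × ℕ => d (T^[p.1] x) (T^[p.2] x)) Filter.atTop (nhds 0) ∧
    ∃ z : X, Filter.Tendsto (fun n => d (T^[n] x) z) Filter.atTop (nhds 0) := by
  obtain ⟨hα0, hα1⟩ := hα
  have hs0 : (0:ℝ) < s := lt_of_lt_of_le one_pos hs
  have hsα0 : 0 ≤ s * α := le_of_lt (mul_pos hs0 hα0)
  set a : ℕ → ℝ := fun k => d (T^[k] x) (T^[k+1] x) with ha
  have ha_nonneg : ∀ k, 0 ≤ a k := fun k => hnonneg _ _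
  -- shifted PA inequality for the sequence a
  have hstep : ∀ m n, N ≤ n →
      ∑ k ∈ Finset.range n, a (m + k + 1) ≤ α * ∑ k ∈ Finset.range n, a (m + k) := by
    intro m n hn
    have h := hPA (T^[m] x) (T^[m+1] x) n hn
    have e1 : ∑ k ∈ Finset.range n, d (T^[k+1] (T^[m] x)) (T^[k+1] (T^[m+1] x))
        = ∑ k ∈ Finset.range n, a (m + k + 1) := by
      refine Finset.sum_congr rfl ?_
      intro k _
      rw [← Function.iterate_add_apply, ← Function.iterate_add_apply, ha]
      simp only
      congr 2 <;> omega
    have e2 : ∑ k ∈ Finset.range n, d (T^[k] (T^[m] x)) (T^[k] (T^[m+1] x))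
        = ∑ k ∈ Finset.range n, a (m + k) := by
      refine Finset.sum_congr rfl ?_
      intro k _
      rw [← Function.iterate_add_apply, ← Function.iterate_add_apply, ha]
      simp only
      congr 2 <;> omega
    rw [e1, e2] at h
    exact h
  -- summability of a
  have hsum : Summable a := by
    have hα1' : 0 < 1 - α := by linarith
    refine summable_of_sum_range_le (c := a 0 / (1 - α)) ha_nonneg ?_
    intro n
    -- partial sums are monotone
    have mono : ∀ {p q : ℕ}, p ≤ q →
        ∑ k ∈ Finset.range p, a k ≤ ∑ k ∈ Finset.range q, a k := by
      intro p q hpq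
      exact Finset.sum_le_sum_of_subset_of_nonneg (Finset.range_subset_range.mpr hpq)
        (fun i _ _ => ha_nonneg i)
    have key : ∀ n, N ≤ n → ∑ k ∈ Finset.range (n+1), a k ≤ a 0 / (1 - α) := by
      intro n hn
      have h := hstep 0 n hn
      simp only [zero_add] at h
      have hshift : ∑ k ∈ Finset.range (n+1), a k
          = a 0 + ∑ k ∈ Finset.range n, a (k + 1) := by
        rw [Finset.sum_range_succ' a n]; ring
      have h2 : ∑ k ∈ Finset.range n, a k ≤ ∑ k ∈ Finset.range (n+1), a k :=
        mono (Nat.le_succ n)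
      have : ∑ k ∈ Finset.range (n+1), a k ≤ a 0 + α * ∑ k ∈ Finset.range (n+1), a k := by
        calc ∑ k ∈ Finset.range (n+1), a k = a 0 + ∑ k ∈ Finset.range n, a (k+1) := hshift
          _ ≤ a 0 + α * ∑ k ∈ Finset.range n, a k := by linarith [hstep 0 n hn,
              (by simpa using hstep 0 n hn : ∑ k ∈ Finset.range n, a (k+1)
                  ≤ α * ∑ k ∈ Finset.range n, a k)]
          _ ≤ a 0 + α * ∑ k ∈ Finset.range (n+1), a k := by nlinarith [h2]
      rw [le_div_iff₀ hα1']
      nlinarith [this]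
    rcases le_or_gt n (N+1) with h | h
    · exact le_trans (mono h) (key N le_rfl)
    · rcases Nat.exists_eq_add_of_lt h with ⟨c, hc⟩
      have : n = (N + c + 1) + 1 := by omega
      rw [this]
      exact key _ (by omega)
  -- tails
  set t : ℕ → ℝ := fun m => ∑' k, a (m + k) with ht
  have hsum_tail : ∀ m, Summable (fun k => a (m + k)) := by
    intro m
    have := (summable_nat_add_iff m).mpr hsum
    exact this.congr (fun k => by rw [add_comm])
  have ht_nonneg : ∀ m, 0 ≤ t m := fun m => tsum_nonneg (fun k => ha_nonneg _)
  have htail_step : ∀ m, t (m+1) ≤ α * t m := by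
    intro m
    refine Summable.tsum_le_of_sum_range_le (hsum_tail (m+1)) ?_
    · intro n
      have mono : ∀ {p q : ℕ}, p ≤ q →
          ∑ k ∈ Finset.range p, a (m+1+k) ≤ ∑ k ∈ Finset.range q, a (m+1+k) := by
        intro p q hpq
        exact Finset.sum_le_sum_of_subset_of_nonneg (Finset.range_subset_range.mpr hpq)
          (fun i _ _ => ha_nonneg _)
      have key : ∀ n, N ≤ n → ∑ k ∈ Finset.range n, a (m+1+k) ≤ α * t m := by
        intro n hn
        have h := hstep m n hn
        have e : ∑ k ∈ Finset.range n, a (m + k + 1) = ∑ k ∈ Finset.range n, a (m+1+k) := by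
          refine Finset.sum_congr rfl (fun k _ => by congr 1; omega)
        rw [e] at h
        refine le_trans h ?_
        have : ∑ k ∈ Finset.range n, a (m + k) ≤ t m :=
          Summable.sum_le_tsum (Finset.range n) (fun i _ => ha_nonneg _) (hsum_tail m)
        nlinarith [this]
      rcases le_or_gt N n with h | h
      · exact key n h
      · exact le_trans (mono (le_of_lt h)) (key N le_rfl)
  have htail_geo : ∀ m, t m ≤ α ^ m * t 0 := by
    intro m
    induction m with
    | zero => simp
    | succ m ih =>
      calc t (m+1) ≤ α * t m := htail_step m
        _ ≤ α * (α ^ m * t 0) := by nlinarith [ih]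
        _ = α ^ (m+1) * t 0 := by ring
  have ha_le : ∀ m, a m ≤ α ^ m * t 0 := by
    intro m
    refine le_trans ?_ (htail_geo m)
    have := Summable.le_tsum (hsum_tail m) 0 (fun j _ => ha_nonneg _)
    simpa using this
  -- chain estimate
  have key1 : ∀ l m, d (T^[m] x) (T^[m+l] x) ≤ ∑ j ∈ Finset.range l, s^(j+1) * a (m+j) := by
    intro l
    induction l with
    | zero =>
      intro m
      simp [(hd0 _ _).mpr rfl]
    | succ l ih =>
      intro m
      have h1 : d (T^[m] x) (T^[m+(l+1)] x)
          ≤ s * (d (T^[m] x) (T^[m+1] x) + d (T^[m+1] x) (T^[m+(l+1)] x)) := htri _ _ _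
      have h2 : d (T^[m+1] x) (T^[m+(l+1)] x) ≤ ∑ j ∈ Finset.range l, s^(j+1) * a (m+1+j) := by
        have := ih (m+1)
        have e : m + 1 + l = m + (l + 1) := by omega
        rwa [e] at this
      have e3 : ∑ j ∈ Finset.range (l+1), s^(j+1) * a (m+j)
          = (∑ j ∈ Finset.range l, s^(j+1+1) * a (m+(j+1))) + s^1 * a (m+0) := by
        exact Finset.sum_range_succ' (fun j => s^(j+1) * a (m+j)) l
      have e4 : s * ∑ j ∈ Finset.range l, s^(j+1) * a (m+1+j)
          = ∑ j ∈ Finset.range l, s^(j+1+1) * a (m+(j+1)) := by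
        rw [Finset.mul_sum]
        refine Finset.sum_congr rfl (fun j _ => ?_)
        have : m + 1 + j = m + (j + 1) := by omega
        rw [this]; ring
      calc d (T^[m] x) (T^[m+(l+1)] x)
          ≤ s * (d (T^[m] x) (T^[m+1] x) + d (T^[m+1] x) (T^[m+(l+1)] x)) := h1
        _ ≤ s * (a m + ∑ j ∈ Finset.range l, s^(j+1) * a (m+1+j)) := by
            have : d (T^[m] x) (T^[m+1] x) = a m := rfl
            nlinarith [h2, hs0]
        _ = s * a m + ∑ j ∈ Finset.range l, s^(j+1+1) * a (m+(j+1)) := by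
            rw [mul_add, e4]
        _ = ∑ j ∈ Finset.range (l+1), s^(j+1) * a (m+j) := by
            rw [e3]; simp; ring
  set C : ℝ := s * t 0 * (1 - s*α)⁻¹ with hC
  have hden : (0:ℝ) < 1 - s*α := by linarith
  have hC0 : 0 ≤ C := by
    apply mul_nonneg (mul_nonneg (le_of_lt hs0) (ht_nonneg 0))
    exact le_of_lt (inv_pos.mpr hden)
  have key2 : ∀ l m, ∑ j ∈ Finset.range l, s^(j+1) * a (m+j) ≤ C * α ^ m := by
    intro l m
    have step : ∀ j, s^(j+1) * a (m+j) ≤ (s * t 0 * α^m) * (s*α)^j := by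
      intro j
      have h1 : a (m+j) ≤ α^(m+j) * t 0 := ha_le (m+j)
      have h2 : (0:ℝ) < s^(j+1) := pow_pos hs0 _
      calc s^(j+1) * a (m+j) ≤ s^(j+1) * (α^(m+j) * t 0) := by nlinarith [h1, h2]
        _ = (s * t 0 * α^m) * (s*α)^j := by
            rw [pow_succ, pow_add, mul_pow]; ring
    calc ∑ j ∈ Finset.range l, s^(j+1) * a (m+j)
        ≤ ∑ j ∈ Finset.range l, (s * t 0 * α^m) * (s*α)^j :=
          Finset.sum_le_sum (fun j _ => step j)
      _ = (s * t 0 * α^m) * ∑ j ∈ Finset.range l, (s*α)^j := by rw [Finset.mul_sum]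
      _ ≤ (s * t 0 * α^m) * (1 - s*α)⁻¹ := by
          have hge : ∑ j ∈ Finset.range l, (s*α)^j ≤ (1 - s*α)⁻¹ := by
            have hsg : Summable (fun j : ℕ => (s*α)^j) := summable_geometric_of_lt_one hsα0 hsα
            have := Summable.sum_le_tsum (Finset.range l)
              (fun i _ => pow_nonneg hsα0 i) hsg
            rwa [tsum_geometric_of_lt_one hsα0 hsα] at this
          have hpos : 0 ≤ s * t 0 * α^m :=
            mul_nonneg (mul_nonneg (le_of_lt hs0) (ht_nonneg 0)) (pow_nonneg (le_of_lt hα0) m)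
          exact mul_le_mul_of_nonneg_left hge hpos
      _ = C * α ^ m := by rw [hC]; ring
  have hkey : ∀ m n, m ≤ n → d (T^[m] x) (T^[n] x) ≤ C * α ^ m := by
    intro m n h
    have : n = m + (n - m) := by omega
    rw [this]
    exact le_trans (key1 (n-m) m) (key2 (n-m) m)
  have hbound : ∀ p : ℕ × ℕ, d (T^[p.1] x) (T^[p.2] x) ≤ C * α ^ (min p.1 p.2) := by
    intro ⟨m, n⟩
    rcases le_total m n with h | h
    · simpa [min_eq_left h] using hkey m n h
    · rw [hsymm]
      simpa [min_eq_right h] using hkey n m h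
  have htend : Filter.Tendsto (fun p : ℕ × ℕ => d (T^[p.1] x) (T^[p.2] x))
      Filter.atTop (nhds 0) := by
    have hmin : Filter.Tendsto (fun p : ℕ × ℕ => min p.1 p.2) Filter.atTop Filter.atTop := by
      rw [Filter.tendsto_atTop]
      intro b
      filter_upwards [Filter.eventually_ge_atTop ((b, b) : ℕ × ℕ)] with p hp
      exact le_min hp.1 hp.2
    have h1 : Filter.Tendsto (fun p : ℕ × ℕ => C * α ^ (min p.1 p.2))
        Filter.atTop (nhds 0) := by
      have h2 : Filter.Tendsto (fun p : ℕ × ℕ => α ^ (min p.1 p.2)) Filter.atTop (nhds 0) :=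
        (tendsto_pow_atTop_nhds_zero_of_lt_one (le_of_lt hα0) hα1).comp hmin
      simpa using h2.const_mul C
    exact squeeze_zero (fun p => hnonneg _ _) hbound h1
  exact ⟨htend, hcomplete (fun n => T^[n] x) htend⟩
end

section
/- There exists a metric space (X,d) and a mapping T : X → X such that T is a PA-contraction (for some α ∈ (0,1) and N ∈ ℕ) but T is not a Banach contraction for any β ∈ (0,1). Hence the class of PA-contractions strictly contains the class of Banach contractions. -/
abbrev Xex : Type := {x : ℝ // x = 0 ∨ x = 1 ∨ x = 2}

noncomputable def Tex (x : Xex) : Xex :=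
  if x.val = 0 then ⟨1, Or.inr (Or.inl rfl)⟩ else ⟨2, Or.inr (Or.inr rfl)⟩

def twoX : Xex := ⟨2, Or.inr (Or.inr rfl)⟩

lemma Tex_two : Tex twoX = twoX := by
  simp [Tex, twoX]

lemma Tex_Tex (x : Xex) : Tex (Tex x) = twoX := by
  unfold Tex twoX
  by_cases h : x.val = 0 <;> simp [h]

lemma Tex_iter (k : ℕ) (x : Xex) : Tex^[k + 2] x = twoX := by
  induction k with
  | zero => simpa using Tex_Tex x
  | succ n ih =>
    rw [show n + 1 + 2 = (n + 2) + 1 from rfl, Function.iterate_succ_apply', ih, Tex_two]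

lemma dist_Tex_le (x y : Xex) : dist (Tex x) (Tex y) ≤ dist x y := by
  rcases x.2 with hx | hx | hx <;> rcases y.2 with hy | hy | hy <;>
    simp [Tex, hx, hy, Subtype.dist_eq, Real.dist_eq] <;>
    norm_num [abs, max_le_iff, le_max_iff]

theorem stmt_15 :
    ∃ (X : Type) (_ : MetricSpace X) (T : X → X),
      (∃ (α : ℝ) (N : ℕ), α ∈ Set.Ioo (0:ℝ) 1 ∧
        ∀ x y : X, ∀ n ≥ N,
          ∑ k ∈ Finset.range n, dist (T^[k+1] x) (T^[k+1] y)
            ≤ α * ∑ k ∈ Finset.range n, dist (T^[k] x) (T^[k] y)) ∧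
      ¬ ∃ β : ℝ, β ∈ Set.Ioo (0:ℝ) 1 ∧
        ∀ x y : X, dist (T x) (T y) ≤ β * dist x y := by
  refine ⟨Xex, inferInstance, Tex, ⟨1/2, 2, ⟨by norm_num, by norm_num⟩, ?_⟩, ?_⟩
  · intro x y n hn
    have hL : ∑ k ∈ Finset.range n, dist (Tex^[k+1] x) (Tex^[k+1] y)
        = dist (Tex x) (Tex y) := by
      rw [Finset.sum_eq_single 0]
      · simp
      · intro b _ hb
        obtain ⟨m, rfl⟩ := Nat.exists_eq_succ_of_ne_zero hb
        rw [show m + 1 + 1 = m + 2 from rfl, Tex_iter, Tex_iter]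
        simp
      · intro h
        exact absurd (Finset.mem_range.mpr (by omega)) h
    have hR : dist x y + dist (Tex x) (Tex y)
        ≤ ∑ k ∈ Finset.range n, dist (Tex^[k] x) (Tex^[k] y) := by
      have : ∑ k ∈ Finset.range 2, dist (Tex^[k] x) (Tex^[k] y)
          ≤ ∑ k ∈ Finset.range n, dist (Tex^[k] x) (Tex^[k] y) :=
        Finset.sum_le_sum_of_subset_of_nonneg
          (Finset.range_subset_range.mpr hn) (fun _ _ _ => dist_nonneg)
      simpa [Finset.sum_range_succ] using this
    rw [hL]
    calc dist (Tex x) (Tex y) ≤ (1/2) * (dist x y + dist (Tex x) (Tex y)) := by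
          have := dist_Tex_le x y; linarith
      _ ≤ (1/2) * ∑ k ∈ Finset.range n, dist (Tex^[k] x) (Tex^[k] y) := by
          linarith
  · rintro ⟨β, ⟨hβ0, hβ1⟩, h⟩
    have := h ⟨0, Or.inl rfl⟩ ⟨1, Or.inr (Or.inl rfl)⟩
    have e1 : Tex ⟨0, Or.inl rfl⟩ = ⟨1, Or.inr (Or.inl rfl)⟩ := by
      simp [Tex]
    have e2 : Tex ⟨1, Or.inr (Or.inl rfl)⟩ = ⟨2, Or.inr (Or.inr rfl)⟩ := by
      simp only [Tex]; norm_num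
    rw [e1, e2, Subtype.dist_eq, Subtype.dist_eq, Real.dist_eq, Real.dist_eq] at this
    norm_num at this
    linarith
end

section
/- There exists a metric space (X,d) and a mapping T : X → X that is a PA-contraction but not a Kannan contraction. Hence the class of PA-contractions is not contained in the class of Kannan contractions. -/
theorem stmt_17 :
    ∃ (X : Type) (_ : MetricSpace X) (T : X → X),
      (∃ (α : ℝ) (N : ℕ), α ∈ Set.Ioo (0:ℝ) 1 ∧
        ∀ x y : X, ∀ n ≥ N,
          ∑ k ∈ Finset.range n, dist (T^[k+1] x) (T^[k+1] y)
            ≤ α * ∑ k ∈ Finset.range n, dist (T^[k] x) (T^[k] y)) ∧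
      ¬ ∃ β : ℝ, β ∈ Set.Ioo (0:ℝ) (1/2) ∧
        ∀ x y : X, dist (T x) (T y) ≤ β * (dist x (T x) + dist y (T y)) := by
  refine ⟨ℝ, inferInstance, fun x => x / 2, ⟨1/2, 0, ⟨by norm_num, by norm_num⟩, ?_⟩, ?_⟩
  · intro x y n _
    rw [Finset.mul_sum]
    apply Finset.sum_le_sum
    intro k _
    rw [Function.iterate_succ_apply', Function.iterate_succ_apply']
    simp [Real.dist_eq]
    rw [div_sub_div_same, abs_div]
    simp [abs_of_nonneg]
    linarith
  · rintro ⟨β, ⟨hβ0, hβ⟩, h⟩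
    have := h 1 (-1)
    simp [Real.dist_eq] at this
    rw [show (2:ℝ)⁻¹ - -1/2 = 1 from by norm_num, show (1:ℝ) - 2⁻¹ = 1/2 from by norm_num,
      show (-1:ℝ) - -1/2 = -(1/2) from by norm_num, abs_neg, abs_one,
      abs_of_nonneg (by norm_num : (0:ℝ) ≤ 1/2)] at this
    linarith
end
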